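/- Let l be a prelogarithmic section of k((G)), let U ⊊ H be subgroups of G with U a proper convex subgroup of H (U = {1} allowed), and suppose (U,H) satisfies condition (†). Inside the exponential extension G^#, let H^{#,U} := ι(H) · {e(f) : f ∈ k((H^{>U}))} (note k((H^{>U})) ⊆ k((G^{>1})), so this makes sense). Then: (i) ι(H) is a proper convex subgroup of the subgroup H^{#,U} of G^#; (ii) every element of H^{#,U} has a unique representation ι(h)·e(f) with h ∈ H and f ∈ k((H^{>U})) (so H^{#,U} is the anti-lexicographic product of ι(H) and {e(f) : f ∈ k((H^{>U}))}); (iii) l^#(h^#) < |f| for every h^# ∈ H^{#,U} and every nonzero f ∈ k(((H^{#,U})^{>ι(H)})), where (H^{#,U})^{>ι(H)} := {g ∈ H^{#,U} : g > ι(h) for all h ∈ H}. -/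

import Mathlib

/-! Common framework: fields of generalized power series `k((G))` over a multiplicative
linearly ordered abelian group `G`, realized as Mathlib Hahn series over the additive
order-dual of `G` (so that anti well-ordered supports in `G` become partially
well-ordered supports), with the anti-lexicographic order. -/

noncomputable section
open HahnSeries
open scoped Classical

/-- The additive order-dual copy of the multiplicative group `G`:
anti well-ordered subsets of `G` correspond to well-ordered subsets of `gdual G`. -/
abbrev gdual (G : Type*) [CommGroup G] [LinearOrder G] [IsOrderedMonoid G] : Type _ := Additive Gᵒᵈ

/-- View an element of `G` as an exponent (element of `gdual G`). -/
def toGd {G : Type*} [CommGroup G] [LinearOrder G] [IsOrderedMonoid G] (g : G) : gdual G :=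
  Additive.ofMul (OrderDual.toDual g)

/-- View an exponent (element of `gdual G`) as an element of `G`. -/
def toG {G : Type*} [CommGroup G] [LinearOrder G] [IsOrderedMonoid G] (γ : gdual G) : G :=
  OrderDual.ofDual (Additive.toMul γ)

section HahnOrder

variable {k : Type*} [Field k] [LinearOrder k] [IsStrictOrderedRing k] {Γ' : Type*} [LinearOrder Γ']

theorem hahn_leadingCoeff_of_ne {x : HahnSeries Γ' k} (hx : x ≠ 0) :
    x.leadingCoeff = x.coeff (x.isWF_support.min (HahnSeries.support_nonempty_iff.2 hx)) := by
  unfold HahnSeries.leadingCoeff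
  rw [HahnSeries.orderTop_of_ne_zero hx]
  rfl

theorem hahn_leadingCoeff_neg (x : HahnSeries Γ' k) : (-x).leadingCoeff = -x.leadingCoeff := by
  by_cases h : x = 0
  · simp [h]
  · have hn : (-x) ≠ 0 := neg_ne_zero.2 h
    rw [hahn_leadingCoeff_of_ne h, hahn_leadingCoeff_of_ne hn]
    have hmin : (-x).isWF_support.min (HahnSeries.support_nonempty_iff.2 hn)
        = x.isWF_support.min (HahnSeries.support_nonempty_iff.2 h) := by
      apply le_antisymm
      · exact Set.IsWF.min_le _ _ (by
          rw [HahnSeries.support_neg (x := x)]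
          exact x.isWF_support.min_mem (HahnSeries.support_nonempty_iff.2 h))
      · refine Set.IsWF.min_le _ _ ?_
        rw [← HahnSeries.support_neg (x := x)]
        exact (-x).isWF_support.min_mem (HahnSeries.support_nonempty_iff.2 hn)
    rw [hmin, HahnSeries.coeff_neg]

theorem hahn_leadingCoeff_add_pos {a b : HahnSeries Γ' k}
    (ha : 0 < a.leadingCoeff) (hb : 0 < b.leadingCoeff) : 0 < (a + b).leadingCoeff := by
  have key : ∀ x y : HahnSeries Γ' k, 0 < x.leadingCoeff → 0 < y.leadingCoeff →
      ∀ (hx0 : x ≠ 0) (hy0 : y ≠ 0),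
      x.isWF_support.min (HahnSeries.support_nonempty_iff.2 hx0) ≤
        y.isWF_support.min (HahnSeries.support_nonempty_iff.2 hy0) →
      0 < (x + y).leadingCoeff := by
    intro x y hx hy hx0 hy0 hle
    set mx := x.isWF_support.min (HahnSeries.support_nonempty_iff.2 hx0) with hmx
    set my := y.isWF_support.min (HahnSeries.support_nonempty_iff.2 hy0) with hmy
    have hcx : x.coeff mx = x.leadingCoeff := (hahn_leadingCoeff_of_ne hx0).symm
    have hcoeff : 0 < (x + y).coeff mx := by
      rcases lt_or_eq_of_le hle with hlt | heq
      · have hny : y.coeff mx = 0 := by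
          by_contra hc
          exact absurd (Set.IsWF.min_le _ _ (by rwa [HahnSeries.mem_support])) (not_le.2 hlt)
        rw [HahnSeries.coeff_add, hny, add_zero, hcx]; exact hx
      · have hcy : y.coeff mx = y.leadingCoeff := by
          rw [heq]; exact (hahn_leadingCoeff_of_ne hy0).symm
        rw [HahnSeries.coeff_add, hcx, hcy]; exact add_pos hx hy
    have hmem : mx ∈ (x + y).support := by
      rw [HahnSeries.mem_support]; exact ne_of_gt hcoeff
    have hxy0 : x + y ≠ 0 := HahnSeries.support_nonempty_iff.1 ⟨mx, hmem⟩
    have hminxy : (x + y).isWF_support.min (HahnSeries.support_nonempty_iff.2 hxy0) = mx := by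
      apply le_antisymm (Set.IsWF.min_le _ _ hmem)
      have hmm := (x + y).isWF_support.min_mem (HahnSeries.support_nonempty_iff.2 hxy0)
      rcases HahnSeries.support_add_subset _ _ hmm with hmem' | hmem'
      · exact Set.IsWF.min_le _ _ hmem'
      · exact le_trans hle (Set.IsWF.min_le _ _ hmem')
    rw [hahn_leadingCoeff_of_ne hxy0, hminxy]
    exact hcoeff
  have ha0 : a ≠ 0 := by intro h; rw [h] at ha; simp at ha
  have hb0 : b ≠ 0 := by intro h; rw [h] at hb; simp at hb
  rcases le_total (a.isWF_support.min (HahnSeries.support_nonempty_iff.2 ha0))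
      (b.isWF_support.min (HahnSeries.support_nonempty_iff.2 hb0)) with hle | hle
  · exact key a b ha hb ha0 hb0 hle
  · rw [add_comm]; exact key b a hb ha hb0 ha0 hle

/-- The anti-lexicographic linear order on generalized power series:
`x` is positive iff its leading coefficient (the coefficient at the valuation `v x`,
i.e. at the largest element of the support) is positive. -/
instance instHahnLinearOrder : LinearOrder (HahnSeries Γ' k) where
  le x y := x = y ∨ 0 < (y - x).leadingCoeff
  lt x y := 0 < (y - x).leadingCoeff
  le_refl x := Or.inl rfl
  le_trans x y z hxy hyz := by
    rcases hxy with rfl | hxy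
    · exact hyz
    rcases hyz with rfl | hyz
    · exact Or.inr hxy
    · refine Or.inr ?_
      have := hahn_leadingCoeff_add_pos hyz hxy
      rwa [sub_add_sub_cancel] at this
  le_antisymm x y hxy hyx := by
    rcases hxy with rfl | hxy
    · rfl
    rcases hyx with rfl | hyx
    · rfl
    · exfalso
      have h1 : (x - y).leadingCoeff = -(y - x).leadingCoeff := by
        rw [← hahn_leadingCoeff_neg, neg_sub]
      rw [h1] at hyx
      exact absurd hxy (not_lt.2 (le_of_lt (neg_pos.1 hyx)))
  lt_iff_le_not_ge x y := by
    constructor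
    · intro h
      refine ⟨Or.inr h, ?_⟩
      rintro (rfl | h')
      · change 0 < (y - y).leadingCoeff at h
        rw [sub_self] at h
        simp at h
      · have h1 : (x - y).leadingCoeff = -(y - x).leadingCoeff := by
          rw [← hahn_leadingCoeff_neg, neg_sub]
        rw [h1] at h'
        exact absurd h (not_lt.2 (le_of_lt (neg_pos.1 h')))
    · rintro ⟨hle, hnot⟩
      rcases hle with rfl | h
      · exact absurd (Or.inl rfl) hnot
      · exact h
  le_total x y := by
    by_cases h : x = y
    · exact Or.inl (Or.inl h)
    · have h0 : y - x ≠ 0 := sub_ne_zero.2 (Ne.symm h)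
      have hlc : (y - x).leadingCoeff ≠ 0 := HahnSeries.leadingCoeff_ne_zero.2 h0
      rcases lt_or_gt_of_ne hlc with hneg | hpos
      · refine Or.inr (Or.inr ?_)
        rw [show x - y = -(y - x) from (neg_sub y x).symm, hahn_leadingCoeff_neg]
        exact neg_pos.2 hneg
      · exact Or.inl (Or.inr hpos)
  toDecidableLE := fun _ _ => Classical.dec _

/-- With the anti-lexicographic order, `k((G))` is a linearly ordered abelian group. -/
instance instHahnLOACG : IsOrderedAddMonoid (HahnSeries Γ' k) where
  add_le_add_left := by
    intro x y hxy c
    rcases hxy with rfl | h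
    · exact le_refl _
    · exact Or.inr (by rwa [add_sub_add_right_eq_sub])

theorem hahn_lt_iff (x y : HahnSeries Γ' k) : x < y ↔ 0 < (y - x).leadingCoeff := Iff.rfl

theorem hahn_single_pos (a : Γ') : (0 : HahnSeries Γ' k) < HahnSeries.single a 1 := by
  rw [hahn_lt_iff, sub_zero, HahnSeries.leadingCoeff_of_single]
  exact one_pos

theorem hahn_single_lt_single {a b : Γ'} (hab : b < a) :
    (HahnSeries.single a 1 : HahnSeries Γ' k) < HahnSeries.single b 1 := by
  rw [hahn_lt_iff]
  set δ : HahnSeries Γ' k := HahnSeries.single b 1 - HahnSeries.single a 1 with hδdef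
  have hne : b ≠ a := ne_of_lt hab
  have hb : δ.coeff b = 1 := by
    rw [hδdef, HahnSeries.coeff_sub, HahnSeries.coeff_single_same,
      HahnSeries.coeff_single_of_ne hne, sub_zero]
  have hbmem : b ∈ δ.support := by rw [HahnSeries.mem_support, hb]; exact one_ne_zero
  have hδ : δ ≠ 0 := HahnSeries.support_nonempty_iff.1 ⟨b, hbmem⟩
  have hsub : δ.support ⊆ {b, a} := by
    intro γ hγ
    rw [HahnSeries.mem_support] at hγ
    by_contra hγ'
    simp only [Set.mem_insert_iff, Set.mem_singleton_iff, not_or] at hγ'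
    apply hγ
    rw [hδdef, HahnSeries.coeff_sub, HahnSeries.coeff_single_of_ne hγ'.1,
      HahnSeries.coeff_single_of_ne hγ'.2, sub_zero]
  have hmin : δ.isWF_support.min (HahnSeries.support_nonempty_iff.2 hδ) = b := by
    have hmem := δ.isWF_support.min_mem (HahnSeries.support_nonempty_iff.2 hδ)
    have hle := δ.isWF_support.min_le (HahnSeries.support_nonempty_iff.2 hδ) hbmem
    rcases hsub hmem with h | h
    · exact h
    · exact absurd (h ▸ hle) (not_le.2 hab)
  rw [hahn_leadingCoeff_of_ne hδ, hmin, hb]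
  exact one_pos

end HahnOrder

section Series

variable {k : Type*} [Field k] [LinearOrder k] [IsStrictOrderedRing k] {G : Type*} [CommGroup G] [LinearOrder G] [IsOrderedMonoid G]

/-- The summable family `n ↦ (-1)^n/(n+1) • ε^(n+1)` (`ε` of positive order). -/
def logFamily (ε : HahnSeries (gdual G) k) (hε : 0 < ε.orderTop) :
    HahnSeries.SummableFamily (gdual G) k ℕ where
  toFun n := ((-1 : k) ^ n / ((n : k) + 1)) • ε ^ (n + 1)
  isPWO_iUnion_support' := by
    refine ((HahnSeries.SummableFamily.powers ε).isPWO_iUnion_support).mono ?_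
    intro γ hγ
    rw [Set.mem_iUnion] at hγ ⊢
    obtain ⟨n, hn⟩ := hγ
    refine ⟨n + 1, ?_⟩
    rw [HahnSeries.mem_support] at hn ⊢
    intro h
    rw [HahnSeries.SummableFamily.powers_of_orderTop_pos hε] at h
    apply hn
    show (((-1 : k) ^ n / ((n : k) + 1)) • ε ^ (n + 1)).coeff γ = 0
    rw [HahnSeries.coeff_smul]
    show ((-1 : k) ^ n / ((n : k) + 1)) • (ε ^ (n + 1)).coeff γ = 0
    rw [show (ε ^ (n + 1)).coeff γ = 0 from h, smul_zero]
  finite_co_support' g := by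
    have h := (HahnSeries.SummableFamily.powers ε).finite_co_support g
    refine Set.Finite.subset (h.preimage (Set.injOn_of_injective Nat.succ_injective)) ?_
    intro n hn
    simp only [Set.mem_preimage, Set.mem_setOf_eq] at hn ⊢
    intro h0
    apply hn
    show (((-1 : k) ^ n / ((n : k) + 1)) • ε ^ (n + 1)).coeff g = 0
    rw [HahnSeries.coeff_smul]
    have : ((HahnSeries.SummableFamily.powers ε) (Nat.succ n)).coeff g = 0 := h0
    rw [HahnSeries.SummableFamily.powers_of_orderTop_pos hε] at this
    rw [show (ε ^ (n + 1)).coeff g = 0 from this, smul_zero]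

/-- The logarithm on 1-units: `1 + ε ↦ Σ_{i ≥ 1} (-1)^(i-1) ε^i / i`
(for `ε` supported on `G^{<1}`; junk value `0` otherwise). -/
def logOneUnit (ε : HahnSeries (gdual G) k) : HahnSeries (gdual G) k :=
  if hε : 0 < ε.orderTop then (logFamily ε hε).hsum else 0

/-- The canonical extension of an order-preserving embedding `ψ : G₁ → G₂` to the fields of
generalized power series, applying `ψ` to every monomial (junk value `0` if `ψ` is not
order-preserving). -/
def extMap {k : Type*} [Field k] [LinearOrder k] [IsStrictOrderedRing k] {G₁ G₂ : Type*} [CommGroup G₁] [LinearOrder G₁] [IsOrderedMonoid G₁]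
    [CommGroup G₂] [LinearOrder G₂] [IsOrderedMonoid G₂] (ψ : G₁ → G₂) :
    HahnSeries (gdual G₁) k → HahnSeries (gdual G₂) k :=
  if h : StrictMono ψ then
    HahnSeries.embDomain
      (OrderEmbedding.ofStrictMono (fun γ => toGd (ψ (toG γ)))
        (fun a b hab => show toGd (ψ (toG a)) < toGd (ψ (toG b)) from
          h (show toG b < toG a from hab)))
  else fun _ => 0

/-- The additive subgroup `k((G^{>1}))` of the series supported on `G^{>1}`. -/
def largeSeries (k : Type*) [Field k] [LinearOrder k] [IsStrictOrderedRing k] (G : Type*) [CommGroup G] [LinearOrder G] [IsOrderedMonoid G] :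
    AddSubgroup (HahnSeries (gdual G) k) where
  carrier := {f | ∀ γ ∈ f.support, γ < (0 : gdual G)}
  zero_mem' := by intro γ hγ; rw [HahnSeries.support_zero] at hγ; exact absurd hγ (Set.notMem_empty γ)
  add_mem' := by
    intro a b ha hb γ hγ
    rcases HahnSeries.support_add_subset _ _ hγ with h | h
    exacts [ha γ h, hb γ h]
  neg_mem' := by
    intro a ha γ hγ
    rw [HahnSeries.support_neg] at hγ
    exact ha γ hγ

theorem mem_largeSeries {f : HahnSeries (gdual G) k} :
    f ∈ largeSeries k G ↔ ∀ γ ∈ f.support, γ < (0 : gdual G) := Iff.rfl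

/-- `log : (k^{>0}, ·) → (k, +)` is an order-preserving group embedding. -/
structure IsResidueLog (lg : k → k) : Prop where
  map_mul : ∀ a b : k, 0 < a → 0 < b → lg (a * b) = lg a + lg b
  strictMonoOn : StrictMonoOn lg (Set.Ioi 0)

/-- A prelogarithmic section of `k((G))`: an order-preserving group embedding
`l : (G, ·) → (k((G^{>1})), +)`. -/
structure IsPrelogSection (l : G → HahnSeries (gdual G) k) : Prop where
  supp_large : ∀ g : G, l g ∈ largeSeries k G
  map_mul : ∀ g h : G, l (g * h) = l g + l h
  strictMono : StrictMono l

/-- The prelogarithm associated to a prelogarithmic section `l` and a logarithm `lg` on the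
residue field: `L(g·a·(1+ε)) = l(g) + log(a) + Σ (-1)^(i-1) ε^i/i`. -/
def prelogL (lg : k → k) (l : G → HahnSeries (gdual G) k)
    (α : HahnSeries (gdual G) k) : HahnSeries (gdual G) k :=
  l (toG α.order) + HahnSeries.C (lg α.leadingCoeff) +
    logOneUnit ((HahnSeries.single α.order α.leadingCoeff)⁻¹ * α - 1)

/-- The group of exponentials `G^# = e[k((G^{>1}))]`, a multiplicative copy of the ordered
additive group `k((G^{>1}))`. The element `e(α)` is `Multiplicative.ofAdd ⟨α, _⟩`. -/
abbrev Gsharp (k : Type*) [Field k] [LinearOrder k] [IsStrictOrderedRing k] (G : Type*) [CommGroup G] [LinearOrder G] [IsOrderedMonoid G] :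
    Type _ := Multiplicative ↥(largeSeries k G)

/-- The embedding `ι : G → G^#`, `ι(g) := e(l(g))`. -/
def iotaSharp (l : G → HahnSeries (gdual G) k) (hl : ∀ g, l g ∈ largeSeries k G) (g : G) :
    Gsharp k G :=
  Multiplicative.ofAdd (⟨l g, hl g⟩ : ↥(largeSeries k G))

/-- The prelogarithmic section `l^#` of `k((G^#))`: `l^#(e(α)) := ι(α)`, where
`ι : k((G)) → k((G^#))` is the canonical extension of `ι : G → G^#`. -/
def lsharpFun (l : G → HahnSeries (gdual G) k) (hl : ∀ g, l g ∈ largeSeries k G)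
    (x : Gsharp k G) : HahnSeries (gdual (Gsharp k G)) k :=
  extMap (iotaSharp l hl) ((Multiplicative.toAdd x : ↥(largeSeries k G)) : HahnSeries (gdual G) k)

/-- The induced map `ψ^# : G₁^# → G₂^#`, `ψ^#(e(α)) := e(ψ(α))` (junk value `1` if the
canonical extension of `ψ` does not map `k((G₁^{>1}))` into `k((G₂^{>1}))`). -/
def psiSharp {k : Type*} [Field k] [LinearOrder k] [IsStrictOrderedRing k] {G₁ G₂ : Type*} [CommGroup G₁] [LinearOrder G₁] [IsOrderedMonoid G₁]
    [CommGroup G₂] [LinearOrder G₂] [IsOrderedMonoid G₂] (ψ : G₁ → G₂) (x : Gsharp k G₁) : Gsharp k G₂ :=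
  if h : ∀ f ∈ largeSeries k G₁, extMap ψ f ∈ largeSeries k G₂ then
    Multiplicative.ofAdd
      (⟨extMap ψ ((Multiplicative.toAdd x : ↥(largeSeries k G₁)) : HahnSeries (gdual G₁) k),
        h _ (Multiplicative.toAdd x).2⟩ : ↥(largeSeries k G₂))
  else 1

/-- Condition (†) for subgroups `U ⊆ H` of `G`:
`l(H) < |f|` for every nonzero `f ∈ k((H^{>U}))`. -/
def CondDagger (l : G → HahnSeries (gdual G) k) (U H : Subgroup G) : Prop :=
  ∀ h ∈ H, ∀ f : HahnSeries (gdual G) k, f ≠ 0 →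
    (∀ γ ∈ f.support, toG γ ∈ H ∧ ∀ u ∈ U, u < toG γ) → l h < |f|

/-- The growth axiom for a subgroup `H` of `G`:
`l(H) < |f|` for every nonzero `f ∈ k((H^{>1}))`. -/
def GrowthAxiom (l : G → HahnSeries (gdual G) k) (H : Subgroup G) : Prop :=
  CondDagger l (⊥ : Subgroup G) H

theorem mem_large_of_gt {f : HahnSeries (gdual G) k} {U H : Subgroup G}
    (hf : ∀ γ ∈ f.support, toG γ ∈ H ∧ ∀ u ∈ U, u < toG γ) : f ∈ largeSeries k G :=
  fun γ hγ => show (1 : G) < toG γ from (hf γ hγ).2 1 U.one_mem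

/-- The set `H^{#,U} = ι(H)·e[k((H^{>U}))] ⊆ G^#`. -/
def sharpProdSet (l : G → HahnSeries (gdual G) k) (hl : ∀ g, l g ∈ largeSeries k G)
    (U H : Subgroup G) : Set (Gsharp k G) :=
  {x | ∃ h ∈ H, ∃ f : HahnSeries (gdual G) k,
    ∃ hf : ∀ γ ∈ f.support, toG γ ∈ H ∧ ∀ u ∈ U, u < toG γ,
    x = iotaSharp l hl h *
      Multiplicative.ofAdd (⟨f, mem_large_of_gt hf⟩ : ↥(largeSeries k G))}

end Series

section Hahn

variable (k : Type*) [Field k] [LinearOrder k] [IsStrictOrderedRing k] {Γ : Type*} [LinearOrder Γ]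

/-- The Hahn group `Γ^k` of formal products `∏_γ x_γ^(g γ)` with anti well-ordered support,
ordered anti-lexicographically, realized as the multiplicative copy of the additive group of
Hahn series over `Γᵒᵈ` with coefficients in `k`. -/
abbrev HahnGroup (Γ : Type*) [LinearOrder Γ] (k : Type*) [Field k] [LinearOrder k] [IsStrictOrderedRing k] : Type _ :=
  Multiplicative (HahnSeries Γᵒᵈ k)

/-- The monomial `x_γ` in the Hahn group `Γ^k`. -/
def xMon (γ : Γ) : HahnGroup Γ k :=
  Multiplicative.ofAdd (HahnSeries.single (OrderDual.toDual γ) (1 : k))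

/-- The prelogarithmic section `l_σ` on `k((Γ^k))` induced by `σ : Γ → Γ`:
`l_σ(∏_γ x_γ^(g γ)) := Σ_γ (g γ)·x_(σ γ)` (junk value `0` if `σ` is not strictly
order-preserving). -/
def sigmaSection (σ : Γ → Γ) :
    HahnGroup Γ k → HahnSeries (gdual (HahnGroup Γ k)) k :=
  if hσ : StrictMono σ then fun g =>
    HahnSeries.embDomain
      (OrderEmbedding.ofStrictMono
        (fun γ : Γᵒᵈ => toGd (xMon k (σ (OrderDual.ofDual γ))))
        (fun a b hab =>
          show toGd (xMon k (σ (OrderDual.ofDual a))) < toGd (xMon k (σ (OrderDual.ofDual b)))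
          from hahn_single_lt_single
            (show OrderDual.toDual (σ (OrderDual.ofDual a)) <
                OrderDual.toDual (σ (OrderDual.ofDual b)) from
              hσ (show OrderDual.ofDual b < OrderDual.ofDual a from hab))))
      (Multiplicative.toAdd g)
  else fun _ => 0

/-- The lift `ψ_σ : Γ^k → Γ^k` of `σ : Γ → Γ`, `ψ_σ(∏_γ x_γ^(g γ)) := ∏_γ x_(σ γ)^(g γ)`
(junk value `id` if `σ` is not strictly order-preserving). -/
def sigmaAuto (σ : Γ → Γ) : HahnGroup Γ k → HahnGroup Γ k :=
  if hσ : StrictMono σ then fun g =>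
    Multiplicative.ofAdd
      (HahnSeries.embDomain
        (OrderEmbedding.ofStrictMono
          (fun γ : Γᵒᵈ => OrderDual.toDual (σ (OrderDual.ofDual γ)))
          (fun a b hab =>
            show OrderDual.toDual (σ (OrderDual.ofDual a)) <
                OrderDual.toDual (σ (OrderDual.ofDual b)) from
              hσ (show OrderDual.ofDual b < OrderDual.ofDual a from hab)))
        (Multiplicative.toAdd g))
  else id

end Hahn


/-!
Condition (†) says that every monomial of `l(h)`, `h ∈ H`, lies below every monomial in `H^{>U}`.
Hence in `l(h) + f` with `0 ≠ f ∈ k((H^{>U}))` the part `f` decides the sign, which gives the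
unique representation `ι(h)·e(f)`, the anti-lexicographic order and the convexity of `ι(H)`.
For (iii), the monomials of `l^#(ι(h)·e(f))` are the `ι(g)` with `g` a monomial of `l(h) + f`,
and `l(g) < l(h₁) + f₁` whenever `0 < f₁ ∈ k((H^{>U}))`: this is (†) again if `g ∈ H`, and
otherwise `1 < g < m₁` for the leading monomial `m₁ ∈ H` of `f₁`, so `0 < l(g) < l(m₁)`.
-/

theorem hahn_lt_orderTop_of_forall_lt {Γ' R : Type*} [LinearOrder Γ'] [Zero R]
    {x : HahnSeries Γ' R} {μ : Γ'}
    (h : ∀ γ ∈ x.support, μ < γ) : (μ : WithTop Γ') < x.orderTop := by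
  rcases eq_or_ne x 0 with rfl | hx
  · simp
  · rw [HahnSeries.orderTop_of_ne_zero hx, WithTop.coe_lt_coe]
    exact h _ (x.isWF_support.min_mem _)

theorem hahn_exists_orderTop_eq {Γ' R : Type*} [LinearOrder Γ'] [Zero R]
    {x : HahnSeries Γ' R} (hx : x ≠ 0) : ∃ μ ∈ x.support, x.orderTop = μ :=
  ⟨_, x.isWF_support.min_mem _, HahnSeries.orderTop_of_ne_zero hx⟩

section HahnOrderLemmas

variable {k : Type*} [Field k] [LinearOrder k] [IsStrictOrderedRing k] {Γ' : Type*} [LinearOrder Γ']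

theorem hahn_pos_iff {x : HahnSeries Γ' k} : 0 < x ↔ 0 < x.leadingCoeff := by
  rw [hahn_lt_iff, sub_zero]

theorem hahn_lt_iff_toLex_lt {x y : HahnSeries Γ' k} : x < y ↔ toLex x < toLex y := by
  rw [hahn_lt_iff, ← sub_pos (a := toLex y), ← toLex_sub]
  exact HahnSeries.leadingCoeff_pos_iff (x := toLex (y - x))

theorem hahn_toLex_abs (x : HahnSeries Γ' k) : toLex |x| = |toLex x| :=
  (show StrictMono (toLex : HahnSeries Γ' k → Lex (HahnSeries Γ' k)) from
    fun _ _ => hahn_lt_iff_toLex_lt.1).monotone.map_max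

theorem hahn_orderTop_abs (x : HahnSeries Γ' k) : |x|.orderTop = x.orderTop := by
  rcases abs_choice x with h | h <;> rw [h]
  exact HahnSeries.orderTop_neg

theorem hahn_abs_lt_abs_of_orderTop_lt {x y : HahnSeries Γ' k} (h : y.orderTop < x.orderTop) :
    |x| < |y| := by
  rw [hahn_lt_iff_toLex_lt, hahn_toLex_abs, hahn_toLex_abs]
  exact HahnSeries.abs_lt_abs_of_orderTop_ofLex h

theorem hahn_lt_of_orderTop_lt {x y : HahnSeries Γ' k} (hy : 0 < y)
    (h : y.orderTop < x.orderTop) : x < y :=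
  (le_abs_self x).trans_lt (abs_of_pos hy ▸ hahn_abs_lt_abs_of_orderTop_lt h)

theorem hahn_orderTop_le_orderTop_of_lt {x y : HahnSeries Γ' k} (hx : 0 < x) (hxy : x < y) :
    y.orderTop ≤ x.orderTop := by
  by_contra! h
  have := hahn_abs_lt_abs_of_orderTop_lt h
  rw [abs_of_pos hx, abs_of_pos (hx.trans hxy)] at this
  exact this.not_gt hxy

theorem hahn_exists_single_lt {a : HahnSeries Γ' k} {μ : Γ'} (ha : 0 < a)
    (hμ : a.orderTop ≤ μ) : ∃ c : k, 0 < c ∧ HahnSeries.single μ c < a := by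
  have ha0 : a ≠ 0 := ha.ne'
  have hlc : 0 < a.leadingCoeff := hahn_pos_iff.1 ha
  set ν := a.orderTop.untop (HahnSeries.orderTop_ne_top.2 ha0)
  have hνμ : ν ≤ μ := by rwa [← WithTop.coe_le_coe, WithTop.coe_untop]
  refine ⟨a.leadingCoeff / 2, half_pos hlc,
    hahn_lt_iff_toLex_lt.2 ((HahnSeries.lt_iff _ _).2 ⟨ν, fun j hj => ?_, ?_⟩)⟩
  · rw [ofLex_toLex, ofLex_toLex, HahnSeries.coeff_single_of_ne (hj.trans_le hνμ).ne,
      HahnSeries.coeff_eq_zero_of_lt_orderTop]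
    rwa [← WithTop.coe_untop a.orderTop (HahnSeries.orderTop_ne_top.2 ha0), WithTop.coe_lt_coe]
  · rw [ofLex_toLex, ofLex_toLex, HahnSeries.coeff_untop_eq_leadingCoeff, HahnSeries.coeff_single]
    split_ifs <;> linarith

theorem hahn_lt_orderTop_of_forall_abs_lt_single {x : HahnSeries Γ' k} {μ : Γ'}
    (h : ∀ c : k, 0 < c → |x| < HahnSeries.single μ c) : (μ : WithTop Γ') < x.orderTop := by
  by_contra! hle
  have hx : x ≠ 0 := by rintro rfl; simp at hle
  rw [← hahn_orderTop_abs] at hle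
  obtain ⟨c, hc, hlt⟩ := hahn_exists_single_lt (abs_pos.2 hx) hle
  exact (h c hc).not_gt hlt

end HahnOrderLemmas

theorem Subgroup.exists_mem_forall_lt_of_convex {G : Type*} [CommGroup G] [LinearOrder G]
    [IsOrderedMonoid G] {U H : Subgroup G} (hUH : U < H)
    (hconvex : ∀ h ∈ H, ∀ u ∈ U, 1 < h → h < u → h ∈ U) : ∃ h ∈ H, ∀ u ∈ U, u < h := by
  obtain ⟨g, hgH, hgU⟩ := SetLike.exists_of_lt hUH
  wlog hg : 1 < g generalizing g
  · rcases (not_lt.1 hg).lt_or_eq with hg | rfl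
    · exact this g⁻¹ (H.inv_mem hgH) (fun h => hgU (by simpa using U.inv_mem h))
        (one_lt_inv'.2 hg)
    · exact absurd U.one_mem hgU
  refine ⟨g, hgH, fun u hu => lt_of_not_ge fun hgu => hgU ?_⟩
  rcases hgu.lt_or_eq with hlt | rfl
  · exact hconvex g hgH u hu hg hlt
  · exact hu

section Dagger

variable {k : Type*} [Field k] [LinearOrder k] [IsStrictOrderedRing k]
  {G : Type*} [CommGroup G] [LinearOrder G] [IsOrderedMonoid G]

theorem toG_lt_toG {γ δ : gdual G} : toG γ < toG δ ↔ δ < γ := Iff.rfl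

@[simp]
theorem toGd_toG (γ : gdual G) : toGd (toG γ) = γ := rfl

/-- `k((H^{>U}))`. -/
def seriesAbove (k : Type*) [Field k] [LinearOrder k] [IsStrictOrderedRing k]
    (U H : Subgroup G) : AddSubgroup (HahnSeries (gdual G) k) where
  carrier := {f | ∀ γ ∈ f.support, toG γ ∈ H ∧ ∀ u ∈ U, u < toG γ}
  zero_mem' := by simp
  add_mem' ha hb γ hγ := (HahnSeries.support_add_subset _ _ hγ).elim (ha γ) (hb γ)
  neg_mem' ha γ hγ := ha γ (by rwa [HahnSeries.support_neg] at hγ)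

variable {U H : Subgroup G}

theorem mem_seriesAbove {f : HahnSeries (gdual G) k} :
    f ∈ seriesAbove k U H ↔ ∀ γ ∈ f.support, toG γ ∈ H ∧ ∀ u ∈ U, u < toG γ := Iff.rfl

theorem single_mem_seriesAbove {m : G} (hm : m ∈ H) (hmU : ∀ u ∈ U, u < m) (c : k) :
    HahnSeries.single (toGd m) c ∈ seriesAbove k U H := fun γ hγ => by
  rw [HahnSeries.support_single_subset hγ]
  exact ⟨hm, hmU⟩

variable {l : G → HahnSeries (gdual G) k}

theorem IsPrelogSection.map_one (hl : IsPrelogSection l) : l 1 = 0 := by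
  simpa using hl.map_mul 1 1

theorem IsPrelogSection.map_inv (hl : IsPrelogSection l) (g : G) : l g⁻¹ = -l g :=
  eq_neg_of_add_eq_zero_left (by rw [← hl.map_mul, inv_mul_cancel, hl.map_one])

theorem IsPrelogSection.pos (hl : IsPrelogSection l) {g : G} (hg : 1 < g) : 0 < l g :=
  hl.map_one ▸ hl.strictMono hg

theorem CondDagger.orderTop_lt_orderTop (hdag : CondDagger l U H) (hl : IsPrelogSection l)
    {h : G} (hh : h ∈ H) {f : HahnSeries (gdual G) k} (hf : f ∈ seriesAbove k U H)
    (hf0 : f ≠ 0) : f.orderTop < (l h).orderTop := by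
  obtain ⟨μ, hμf, hμ⟩ := hahn_exists_orderTop_eq hf0
  obtain ⟨hμH, hμU⟩ := mem_seriesAbove.1 hf μ hμf
  rw [hμ]
  -- by (†) applied to `h` and `h⁻¹`, `|l h|` lies below every positive multiple of `single μ 1`
  refine hahn_lt_orderTop_of_forall_abs_lt_single fun c hc => ?_
  have hsingle : ∀ g ∈ H, l g < HahnSeries.single μ c := fun g hg => by
    have hpos : 0 < HahnSeries.single μ c := hahn_pos_iff.2 (by simpa using hc)
    simpa [toGd_toG, abs_of_pos hpos] using hdag g hg _ (HahnSeries.single_ne_zero hc.ne')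
      (single_mem_seriesAbove hμH hμU c)
  exact abs_lt.2 ⟨neg_lt.1 (hl.map_inv h ▸ hsingle _ (H.inv_mem hh)), hsingle h hh⟩

theorem CondDagger.add_lt_add_of_lt (hdag : CondDagger l U H) (hl : IsPrelogSection l)
    {h h' : G} (hh : h ∈ H) (hh' : h' ∈ H) {f f' : HahnSeries (gdual G) k}
    (hf : f ∈ seriesAbove k U H) (hf' : f' ∈ seriesAbove k U H) (hff' : f < f') :
    l h + f < l h' + f' := by
  have := hdag (h * h'⁻¹) (H.mul_mem hh (H.inv_mem hh')) (f' - f) (sub_ne_zero.2 hff'.ne')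
    (sub_mem hf' hf)
  rw [abs_of_pos (sub_pos.2 hff'), hl.map_mul, hl.map_inv, ← sub_eq_add_neg] at this
  rw [add_comm (l h')]
  exact sub_lt_sub_iff.1 this

theorem CondDagger.add_lt_add_iff (hdag : CondDagger l U H) (hl : IsPrelogSection l)
    {h h' : G} (hh : h ∈ H) (hh' : h' ∈ H) {f f' : HahnSeries (gdual G) k}
    (hf : f ∈ seriesAbove k U H) (hf' : f' ∈ seriesAbove k U H) :
    l h + f < l h' + f' ↔ f < f' ∨ f = f' ∧ h < h' := by
  refine ⟨fun hlt => ?_, ?_⟩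
  · rcases lt_trichotomy f f' with hff' | rfl | hff'
    · exact Or.inl hff'
    · exact Or.inr ⟨rfl, hl.strictMono.lt_iff_lt.1 (lt_of_add_lt_add_right hlt)⟩
    · exact absurd (hdag.add_lt_add_of_lt hl hh' hh hf' hf hff') hlt.asymm
  · rintro (hff' | ⟨rfl, hhh'⟩)
    · exact hdag.add_lt_add_of_lt hl hh hh' hf hf' hff'
    · exact add_lt_add_left (hl.strictMono hhh') f

theorem CondDagger.eq_of_add_eq (hdag : CondDagger l U H) (hl : IsPrelogSection l)
    {h h' : G} (hh : h ∈ H) (hh' : h' ∈ H) {f f' : HahnSeries (gdual G) k}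
    (hf : f ∈ seriesAbove k U H) (hf' : f' ∈ seriesAbove k U H) (heq : l h + f = l h' + f') :
    h = h' ∧ f = f' := by
  obtain rfl : f = f' := by
    by_contra hne
    rcases lt_or_gt_of_ne hne with hlt | hlt
    · exact heq.not_lt (hdag.add_lt_add_of_lt hl hh hh' hf hf' hlt)
    · exact heq.not_gt (hdag.add_lt_add_of_lt hl hh' hh hf' hf hlt)
  exact ⟨hl.strictMono.injective (add_right_cancel heq), rfl⟩

theorem CondDagger.orderTop_lt_orderTop_of_mem_support (hdag : CondDagger l U H)
    (hl : IsPrelogSection l) {h : G} (hh : h ∈ H) {f f₁ : HahnSeries (gdual G) k}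
    (hf : f ∈ seriesAbove k U H) (hf₁ : f₁ ∈ seriesAbove k U H) (hf₁0 : f₁ ≠ 0)
    {γ : gdual G} (hγ : γ ∈ (l h + f).support) : f₁.orderTop < (l (toG γ)).orderTop := by
  rcases HahnSeries.support_add_subset _ _ hγ with hγ | hγ
  · obtain ⟨μ₁, hμ₁, hf₁μ₁⟩ := hahn_exists_orderTop_eq hf₁0
    have hγμ₁ : μ₁ < γ := by
      have := (hdag.orderTop_lt_orderTop hl hh hf₁ hf₁0).trans_le
        (HahnSeries.orderTop_le_of_coeff_ne_zero hγ)
      rwa [hf₁μ₁, WithTop.coe_lt_coe] at this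
    -- `1 < toG γ < toG μ₁`, so the leading monomial of `l (toG μ₁)` is at least that of `l (toG γ)`
    calc f₁.orderTop < (l (toG μ₁)).orderTop :=
          hdag.orderTop_lt_orderTop hl ((mem_seriesAbove.1 hf₁ μ₁ hμ₁).1) hf₁ hf₁0
      _ ≤ (l (toG γ)).orderTop :=
          hahn_orderTop_le_orderTop_of_lt (hl.pos (hl.supp_large h γ hγ))
            (hl.strictMono (toG_lt_toG.2 hγμ₁))
  · exact hdag.orderTop_lt_orderTop hl (mem_seriesAbove.1 hf γ hγ).1 hf₁ hf₁0

theorem CondDagger.lt_add_of_mem_support (hdag : CondDagger l U H) (hl : IsPrelogSection l)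
    {h h₁ : G} (hh : h ∈ H) (hh₁ : h₁ ∈ H) {f f₁ : HahnSeries (gdual G) k}
    (hf : f ∈ seriesAbove k U H) (hf₁ : f₁ ∈ seriesAbove k U H) (hf₁pos : 0 < f₁)
    {γ : gdual G} (hγ : γ ∈ (l h + f).support) : l (toG γ) < l h₁ + f₁ := by
  have : f₁.orderTop < (l (toG γ) - l h₁).orderTop :=
    (lt_min (hdag.orderTop_lt_orderTop_of_mem_support hl hh hf hf₁ hf₁pos.ne' hγ)
      (hdag.orderTop_lt_orderTop hl hh₁ hf₁ hf₁pos.ne')).trans_le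
      HahnSeries.min_orderTop_le_orderTop_sub
  exact sub_lt_iff_lt_add'.1 (hahn_lt_of_orderTop_lt hf₁pos this)

end Dagger

section Sharp

variable {k : Type*} [Field k] [LinearOrder k] [IsStrictOrderedRing k]
  {G : Type*} [CommGroup G] [LinearOrder G] [IsOrderedMonoid G]
  {l : G → HahnSeries (gdual G) k} {U H : Subgroup G}

theorem Gsharp.ext {x y : Gsharp k G}
    (h : ((Multiplicative.toAdd x : largeSeries k G) : HahnSeries (gdual G) k) =
      (Multiplicative.toAdd y : largeSeries k G)) : x = y :=
  Multiplicative.toAdd.injective (Subtype.ext h)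

theorem Gsharp.ext_iff {x y : Gsharp k G} :
    x = y ↔ ((Multiplicative.toAdd x : largeSeries k G) : HahnSeries (gdual G) k) =
      (Multiplicative.toAdd y : largeSeries k G) :=
  ⟨fun h => h ▸ rfl, Gsharp.ext⟩

theorem iotaSharp_strictMono (hls : ∀ g, l g ∈ largeSeries k G) (hmono : StrictMono l) :
    StrictMono (iotaSharp l hls) :=
  fun _ _ hab => Subtype.mk_lt_mk.2 (hmono hab)

theorem lsharpFun_support_subset (hls : ∀ g, l g ∈ largeSeries k G) (hmono : StrictMono l)
    (x : Gsharp k G) :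
    (lsharpFun l hls x).support ⊆ (fun γ => toGd (iotaSharp l hls (toG γ))) ''
      ((Multiplicative.toAdd x : largeSeries k G) : HahnSeries (gdual G) k).support := by
  rw [lsharpFun, extMap, dif_pos (iotaSharp_strictMono hls hmono)]
  exact HahnSeries.support_embDomain_subset

def sharpProdSubgroup (hl : IsPrelogSection l) (U H : Subgroup G) : Subgroup (Gsharp k G) where
  carrier := sharpProdSet l hl.supp_large U H
  one_mem' := ⟨1, H.one_mem, 0, (seriesAbove k U H).zero_mem,
    Gsharp.ext (show 0 = l 1 + 0 by rw [hl.map_one, add_zero])⟩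
  mul_mem' := by
    rintro _ _ ⟨h, hh, f, hf, rfl⟩ ⟨h', hh', f', hf', rfl⟩
    exact ⟨h * h', H.mul_mem hh hh', f + f', (seriesAbove k U H).add_mem hf hf',
      Gsharp.ext (show l h + f + (l h' + f') = l (h * h') + (f + f') by
        rw [hl.map_mul]; abel)⟩
  inv_mem' := by
    rintro _ ⟨h, hh, f, hf, rfl⟩
    exact ⟨h⁻¹, H.inv_mem hh, -f, (seriesAbove k U H).neg_mem hf,
      Gsharp.ext (show -(l h + f) = l h⁻¹ + -f by rw [hl.map_inv, neg_add])⟩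

theorem iotaSharp_mem_sharpProdSet (hl : IsPrelogSection l) {h : G} (hh : h ∈ H) :
    iotaSharp l hl.supp_large h ∈ sharpProdSet l hl.supp_large U H :=
  ⟨h, hh, 0, (seriesAbove k U H).zero_mem, Gsharp.ext (add_zero (l h)).symm⟩

theorem CondDagger.exists_mem_sharpProdSet_notMem_image (hdag : CondDagger l U H)
    (hl : IsPrelogSection l) (hUH : U < H)
    (hconvex : ∀ h ∈ H, ∀ u ∈ U, 1 < h → h < u → h ∈ U) :
    ∃ x ∈ sharpProdSet l hl.supp_large U H, x ∉ iotaSharp l hl.supp_large '' (H : Set G) := by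
  obtain ⟨h₀, hh₀, hUh₀⟩ := Subgroup.exists_mem_forall_lt_of_convex hUH hconvex
  have hf₀ := single_mem_seriesAbove (k := k) hh₀ hUh₀ 1
  refine ⟨_, ⟨1, H.one_mem, _, hf₀, rfl⟩, ?_⟩
  rintro ⟨h, hh, heq⟩
  have := hdag.eq_of_add_eq hl hh H.one_mem (seriesAbove k U H).zero_mem hf₀
    (by rw [add_zero]; exact Gsharp.ext_iff.1 heq)
  exact HahnSeries.single_ne_zero one_ne_zero this.2.symm

theorem CondDagger.mem_image_iotaSharp_of_lt (hdag : CondDagger l U H) (hl : IsPrelogSection l)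
    {x : Gsharp k G} (hx : x ∈ sharpProdSet l hl.supp_large U H) {h₀ : G} (hh₀ : h₀ ∈ H)
    (h1x : 1 < x) (hxh₀ : x < iotaSharp l hl.supp_large h₀) :
    x ∈ iotaSharp l hl.supp_large '' (H : Set G) := by
  obtain ⟨h, hh, f, hf, rfl⟩ := hx
  have hzero := (seriesAbove k U H).zero_mem
  have hpos : l 1 + 0 < l h + f := by rw [hl.map_one, add_zero]; exact h1x
  have hlt : l h + f < l h₀ + 0 := by rw [add_zero]; exact hxh₀
  obtain rfl : f = 0 := by
    rcases lt_trichotomy f 0 with hf0 | hf0 | hf0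
    · exact absurd (hdag.add_lt_add_of_lt hl hh H.one_mem hf hzero hf0) hpos.asymm
    · exact hf0
    · exact absurd (hdag.add_lt_add_of_lt hl hh₀ hh hzero hf hf0) hlt.asymm
  exact ⟨h, hh, Gsharp.ext (add_zero (l h)).symm⟩

theorem CondDagger.lsharpFun_lt_abs (hdag : CondDagger l U H) (hl : IsPrelogSection l)
    {x : Gsharp k G} (hx : x ∈ sharpProdSet l hl.supp_large U H)
    {F : HahnSeries (gdual (Gsharp k G)) k} (hF : F ≠ 0)
    (hFsupp : ∀ η ∈ F.support, toG η ∈ sharpProdSet l hl.supp_large U H ∧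
      ∀ h ∈ H, iotaSharp l hl.supp_large h < toG η) :
    lsharpFun l hl.supp_large x < |F| := by
  obtain ⟨h, hh, f, hf, rfl⟩ := hx
  obtain ⟨η, hηF, hFη⟩ := hahn_exists_orderTop_eq hF
  obtain ⟨⟨h₁, hh₁, f₁, hf₁, hη⟩, hgt⟩ := hFsupp η hηF
  have hf₁pos : 0 < f₁ := by
    have := hgt h₁ hh₁
    rw [hη] at this
    exact lt_add_iff_pos_right (l h₁) |>.1 this
  refine hahn_lt_of_orderTop_lt (abs_pos.2 hF) ?_
  rw [hahn_orderTop_abs, hFη]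
  refine hahn_lt_orderTop_of_forall_lt fun δ hδ => ?_
  obtain ⟨γ, hγ, rfl⟩ := lsharpFun_support_subset hl.supp_large hl.strictMono _ hδ
  change iotaSharp l hl.supp_large (toG γ) < toG η
  rw [hη]
  exact hdag.lt_add_of_mem_support hl hh hh₁ hf hf₁ hf₁pos hγ

end Sharp

/-- Let `l` be a prelogarithmic section of `k((G))`, `U ⊊ H` subgroups
of `G` with `U` a proper convex subgroup of `H`, satisfying condition (†).  Inside the
exponential extension `G^#`, let `H^{#,U} := ι(H)·e[k((H^{>U}))]` (= `sharpProdSet`).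
Then `H^{#,U}` is a subgroup of `G^#`; (i) `ι(H)` is a proper convex subgroup of
`H^{#,U}`; (ii) every element of `H^{#,U}` has a unique representation `ι(h)·e(f)` with
`h ∈ H`, `f ∈ k((H^{>U}))`, and `H^{#,U}` is ordered anti-lexicographically (so it is the
anti-lexicographic product of `ι(H)` and `e[k((H^{>U}))]`); (iii) `l^#(h^#) < |F|` for
every `h^# ∈ H^{#,U}` and every nonzero `F ∈ k(((H^{#,U})^{>ι(H)}))`. -/
theorem sharp_extension_lemma {k : Type*} [Field k] [LinearOrder k] [IsStrictOrderedRing k]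
    {G : Type*} [CommGroup G] [LinearOrder G] [IsOrderedMonoid G]
    (l : G → HahnSeries (gdual G) k) (hl : IsPrelogSection l)
    (U H : Subgroup G) (hUH : U ≤ H) (hproper : U ≠ H)
    (hconvex : ∀ h ∈ H, ∀ u ∈ U, 1 < h → h < u → h ∈ U)
    (hdag : CondDagger l U H) :
    ((1 : Gsharp k G) ∈ sharpProdSet l hl.supp_large U H ∧
     (∀ x ∈ sharpProdSet l hl.supp_large U H, ∀ y ∈ sharpProdSet l hl.supp_large U H,
        x * y ∈ sharpProdSet l hl.supp_large U H) ∧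
     (∀ x ∈ sharpProdSet l hl.supp_large U H, x⁻¹ ∈ sharpProdSet l hl.supp_large U H)) ∧
    ((∀ h ∈ H, iotaSharp l hl.supp_large h ∈ sharpProdSet l hl.supp_large U H) ∧
     (∃ x ∈ sharpProdSet l hl.supp_large U H,
        x ∉ iotaSharp l hl.supp_large '' (H : Set G)) ∧
     (∀ x ∈ sharpProdSet l hl.supp_large U H, ∀ h ∈ H,
        1 < x → x < iotaSharp l hl.supp_large h →
        x ∈ iotaSharp l hl.supp_large '' (H : Set G))) ∧
    ((∀ h ∈ H, ∀ h' ∈ H, ∀ f f' : HahnSeries (gdual G) k,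
       ∀ hf : ∀ γ ∈ f.support, toG γ ∈ H ∧ ∀ u ∈ U, u < toG γ,
       ∀ hf' : ∀ γ ∈ f'.support, toG γ ∈ H ∧ ∀ u ∈ U, u < toG γ,
        iotaSharp l hl.supp_large h *
          Multiplicative.ofAdd (⟨f, mem_large_of_gt hf⟩ : ↥(largeSeries k G)) =
        iotaSharp l hl.supp_large h' *
          Multiplicative.ofAdd (⟨f', mem_large_of_gt hf'⟩ : ↥(largeSeries k G)) →
        h = h' ∧ f = f') ∧
     (∀ h ∈ H, ∀ h' ∈ H, ∀ f f' : HahnSeries (gdual G) k,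
       ∀ hf : ∀ γ ∈ f.support, toG γ ∈ H ∧ ∀ u ∈ U, u < toG γ,
       ∀ hf' : ∀ γ ∈ f'.support, toG γ ∈ H ∧ ∀ u ∈ U, u < toG γ,
        (iotaSharp l hl.supp_large h *
            Multiplicative.ofAdd (⟨f, mem_large_of_gt hf⟩ : ↥(largeSeries k G)) <
          iotaSharp l hl.supp_large h' *
            Multiplicative.ofAdd (⟨f', mem_large_of_gt hf'⟩ : ↥(largeSeries k G)) ↔
          (f < f' ∨ (f = f' ∧ h < h'))))) ∧
    (∀ x ∈ sharpProdSet l hl.supp_large U H,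
      ∀ F : HahnSeries (gdual (Gsharp k G)) k, F ≠ 0 →
      (∀ η ∈ F.support, toG η ∈ sharpProdSet l hl.supp_large U H ∧
        ∀ h ∈ H, iotaSharp l hl.supp_large h < toG η) →
      lsharpFun l hl.supp_large x < |F|) := by
  refine ⟨⟨(sharpProdSubgroup hl U H).one_mem,
      fun _ hx _ hy => (sharpProdSubgroup hl U H).mul_mem hx hy,
      fun _ hx => (sharpProdSubgroup hl U H).inv_mem hx⟩,
    ⟨fun _ hh => iotaSharp_mem_sharpProdSet hl hh,
      hdag.exists_mem_sharpProdSet_notMem_image hl (lt_of_le_of_ne hUH hproper) hconvex,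
      fun _ hx _ hh => hdag.mem_image_iotaSharp_of_lt hl hx hh⟩,
    ⟨fun _ hh _ hh' _ _ hf hf' heq => hdag.eq_of_add_eq hl hh hh' hf hf' (Gsharp.ext_iff.1 heq),
      fun _ hh _ hh' _ _ hf hf' => hdag.add_lt_add_iff hl hh hh' hf hf'⟩,
    fun _ hx _ hF hFsupp => hdag.lsharpFun_lt_abs hl hx hF hFsupp⟩

end
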